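/- arXiv:2311.16167 — 4 statements merged into one kernel-verified Lean document; each statement's English description precedes it below -/
import Mathlib

section
/- Let p, q > 0 and M_r > 0. Let F : ℝ_{>0} × ℝ_{>0} → ℝ_{>0} be a function satisfying the scaling laws F(αk, M) = α^p · F(k, M) and F(k, βM) = β^{-q} · F(k, M) for all α, β, k, M > 0. Let 0 < k₁ < k₂ and let b₁, b₂ satisfy b₁ + b₂ = 2 and 0 < b₂ < 1 < b₁ < 2. Then there exist a₁, a₂ > 0 with a₁ + a₂ = 2 and 0 < a₁ < b₁ such that F(k₁, a₁M_r/2) + F(k₂, a₂M_r/2) ≤ F(k₁, b₁M_r/2) + F(k₂, b₂M_r/2). (This is the paper's Theorem 1: after moving-mesh reallocation of sampling points between two subregions of complexities k₁ < k₂, the expected discrete residual loss does not exceed that of the uniform allocation.) -/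
/-- Paper's Theorem 1: after moving-mesh reallocation of sampling points between
two subregions of complexities `k₁ < k₂`, the expected discrete residual loss does
not exceed that of the uniform allocation. -/
theorem mmpde_theorem1
    (p q Mr : ℝ) (hp : 0 < p) (hq : 0 < q) (hMr : 0 < Mr)
    (F : ℝ → ℝ → ℝ)
    (hFpos : ∀ k M : ℝ, 0 < k → 0 < M → 0 < F k M)
    (hscale_k : ∀ α k M : ℝ, 0 < α → 0 < k → 0 < M → F (α * k) M = α ^ p * F k M)
    (hscale_M : ∀ β k M : ℝ, 0 < β → 0 < k → 0 < M → F k (β * M) = β ^ (-q) * F k M)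
    (k₁ k₂ b₁ b₂ : ℝ) (hk₁ : 0 < k₁) (hk : k₁ < k₂)
    (hbsum : b₁ + b₂ = 2) (hb₂0 : 0 < b₂) (hb₂1 : b₂ < 1) (hb₁1 : 1 < b₁) (hb₁2 : b₁ < 2) :
    ∃ a₁ a₂ : ℝ, 0 < a₁ ∧ 0 < a₂ ∧ a₁ + a₂ = 2 ∧ a₁ < b₁ ∧
      F k₁ (a₁ * Mr / 2) + F k₂ (a₂ * Mr / 2) ≤
        F k₁ (b₁ * Mr / 2) + F k₂ (b₂ * Mr / 2) := by
  have hb₁0 : (0:ℝ) < b₁ := lt_trans one_pos hb₁1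
  refine ⟨b₂, b₁, hb₂0, hb₁0, by linarith, lt_trans hb₂1 hb₁1, ?_⟩
  set C : ℝ := Mr / 2 with hC
  have hC0 : 0 < C := by positivity
  have e1 : ∀ b : ℝ, 0 < b → F k₁ (b * Mr / 2) = b ^ (-q) * F k₁ C := by
    intro b hb
    rw [show b * Mr / 2 = b * C by ring]
    exact hscale_M b k₁ C hb hk₁ hC0
  have hk₂ : 0 < k₂ := lt_trans hk₁ hk
  have e2 : ∀ b : ℝ, 0 < b → F k₂ (b * Mr / 2) = b ^ (-q) * F k₂ C := by
    intro b hb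
    rw [show b * Mr / 2 = b * C by ring]
    exact hscale_M b k₂ C hb hk₂ hC0
  rw [e1 b₂ hb₂0, e1 b₁ hb₁0, e2 b₁ hb₁0, e2 b₂ hb₂0]
  have hAB : F k₁ C ≤ F k₂ C := by
    have h := hscale_k (k₂ / k₁) k₁ C (by positivity) hk₁ hC0
    rw [div_mul_cancel₀ _ (ne_of_gt hk₁)] at h
    rw [h]
    have h1 : (1:ℝ) ≤ (k₂ / k₁) ^ p := by
      apply Real.one_le_rpow ?_ hp.le
      rw [le_div_iff₀ hk₁]; linarith
    nlinarith [hFpos k₁ C hk₁ hC0]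
  have hpow : b₁ ^ (-q) < b₂ ^ (-q) :=
    Real.rpow_lt_rpow_of_neg hb₂0 (lt_trans hb₂1 hb₁1) (by linarith)
  nlinarith
end

section
/- Let q > 0 and let b₁, b₂ satisfy b₁ + b₂ = 2 and 0 < b₂ < 1 < b₁ < 2. Define h(x) = [x^q·((2−x)^q/b₂^q − 1)] / [(2−x)^q·(1 − x^q/b₁^q)] for x ∈ (0, b₁). Then h is differentiable on (0, b₁) and h′(x) ≥ 0 for every x ∈ (0, b₁); in particular h is monotone nondecreasing on (0, b₁). -/
/-- The auxiliary function `h` from the proof of the paper's Theorem 1 is differentiable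
with nonnegative derivative on `(0, b₁)`; in particular it is monotone nondecreasing there. -/
theorem mmpde_aux_monotone
    (q b₁ b₂ : ℝ) (hq : 0 < q)
    (hbsum : b₁ + b₂ = 2) (hb₂0 : 0 < b₂) (hb₂1 : b₂ < 1) (hb₁1 : 1 < b₁) (hb₁2 : b₁ < 2)
    (h : ℝ → ℝ)
    (hdef : ∀ x : ℝ, h x =
      x ^ q * ((2 - x) ^ q / b₂ ^ q - 1) / ((2 - x) ^ q * (1 - x ^ q / b₁ ^ q))) :
    (∀ x ∈ Set.Ioo (0 : ℝ) b₁, DifferentiableAt ℝ h x ∧ 0 ≤ deriv h x) ∧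
      MonotoneOn h (Set.Ioo (0 : ℝ) b₁) := by

  have hb₁0 : (0:ℝ) < b₁ := by linarith
  have hA : (0:ℝ) < b₁ ^ q := Real.rpow_pos_of_pos hb₁0 q
  have hB : (0:ℝ) < b₂ ^ q := Real.rpow_pos_of_pos hb₂0 q
  -- the auxiliary decreasing function G
  set g : ℝ → ℝ := fun t => b₁ ^ q * (2 - t) ^ (q + 1) + b₂ ^ q * t ^ (q + 1) with hg
  have hgderiv : ∀ t : ℝ, 0 < t → t < 2 →
      HasDerivAt g ((q+1) * (b₂ ^ q * t ^ q - b₁ ^ q * (2 - t) ^ q)) t := by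
    intro t ht0 ht2
    have h2t : (0:ℝ) < 2 - t := by linarith
    have hu : HasDerivAt (fun y : ℝ => y ^ (q+1)) ((q+1) * t ^ (q+1-1)) t :=
      Real.hasDerivAt_rpow_const (Or.inl ht0.ne')
    have hlin : HasDerivAt (fun y : ℝ => 2 - y) (-1) t := (hasDerivAt_id t).const_sub 2
    have hv : HasDerivAt (fun y : ℝ => (2 - y) ^ (q+1)) ((q+1) * (2-t) ^ (q+1-1) * (-1)) t :=
      (Real.hasDerivAt_rpow_const (p := q+1) (Or.inl h2t.ne')).comp t hlin
    have := (hv.const_mul (b₁ ^ q)).add (hu.const_mul (b₂ ^ q))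
    have heq : b₁ ^ q * ((q+1) * (2-t) ^ (q+1-1) * (-1)) + b₂ ^ q * ((q+1) * t ^ (q+1-1))
        = (q+1) * (b₂ ^ q * t ^ q - b₁ ^ q * (2 - t) ^ q) := by
      have : q + 1 - 1 = q := by ring
      rw [this]; ring
    rw [heq] at this
    exact this
  -- key inequality
  have key : ∀ x ∈ Set.Ioo (0:ℝ) b₁,
      0 ≤ b₁ ^ q * ((2-x) * ((2-x) ^ q - b₂ ^ q)) - b₂ ^ q * (x * (b₁ ^ q - x ^ q)) := by
    intro x hx
    obtain ⟨hx0, hxb⟩ := hx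
    have hx2 : x < 2 := by linarith
    have hanti : AntitoneOn g (Set.Icc x b₁) := by
      apply antitoneOn_of_deriv_nonpos (convex_Icc x b₁)
      · intro t ht
        obtain ⟨ht1, ht2⟩ := ht
        exact ((hgderiv t (by linarith) (by linarith)).continuousAt).continuousWithinAt
      · intro t ht
        rw [interior_Icc] at ht
        exact ((hgderiv t (by linarith [ht.1]) (by linarith [ht.2])).differentiableAt).differentiableWithinAt
      · intro t ht
        rw [interior_Icc] at ht
        obtain ⟨ht1, ht2⟩ := ht
        have ht0 : 0 < t := by linarith
        have h2t : (0:ℝ) < 2 - t := by linarith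
        rw [(hgderiv t ht0 (by linarith)).deriv]
        have hle : b₂ * t ≤ b₁ * (2 - t) := by nlinarith
        have : b₂ ^ q * t ^ q ≤ b₁ ^ q * (2 - t) ^ q := by
          rw [← Real.mul_rpow hb₂0.le ht0.le, ← Real.mul_rpow hb₁0.le h2t.le]
          exact Real.rpow_le_rpow (by positivity) hle hq.le
        nlinarith
    have hgx : g b₁ ≤ g x :=
      hanti (Set.left_mem_Icc.2 hxb.le) (Set.right_mem_Icc.2 hxb.le) hxb.le
    have hgb : g b₁ = 2 * (b₁ ^ q * b₂ ^ q) := by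
      have h2b : 2 - b₁ = b₂ := by linarith
      simp only [hg, h2b]
      rw [Real.rpow_add hb₂0 q 1, Real.rpow_add hb₁0 q 1, Real.rpow_one, Real.rpow_one]
      linear_combination b₁ ^ q * b₂ ^ q * hbsum
    have hsplit1 : (2-x) ^ (q+1) = (2-x) ^ q * (2-x) := by
      rw [Real.rpow_add (by linarith) q 1, Real.rpow_one]
    have hsplit2 : x ^ (q+1) = x ^ q * x := by
      rw [Real.rpow_add hx0 q 1, Real.rpow_one]
    have hgx' : 2 * (b₁ ^ q * b₂ ^ q) ≤
        b₁ ^ q * ((2-x) ^ q * (2-x)) + b₂ ^ q * (x ^ q * x) := by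
      rw [← hsplit1, ← hsplit2, ← hgb]; exact hgx
    nlinarith
  -- derivative computation
  have main : ∀ x ∈ Set.Ioo (0:ℝ) b₁, DifferentiableAt ℝ h x ∧ 0 ≤ deriv h x := by
    intro x hx
    obtain ⟨hx0, hxb⟩ := hx
    have hx2 : (0:ℝ) < 2 - x := by linarith
    have hfun : h = fun y : ℝ =>
        y ^ q * ((2 - y) ^ q / b₂ ^ q - 1) / ((2 - y) ^ q * (1 - y ^ q / b₁ ^ q)) :=
      funext hdef
    have hu : HasDerivAt (fun y : ℝ => y ^ q) (q * x ^ (q - 1)) x :=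
      Real.hasDerivAt_rpow_const (Or.inl hx0.ne')
    have hlin : HasDerivAt (fun y : ℝ => 2 - y) (-1) x := (hasDerivAt_id x).const_sub 2
    have hv : HasDerivAt (fun y : ℝ => (2 - y) ^ q) (q * (2 - x) ^ (q - 1) * (-1)) x :=
      (Real.hasDerivAt_rpow_const (p := q) (Or.inl hx2.ne')).comp x hlin
    have hN : HasDerivAt (fun y : ℝ => y ^ q * ((2 - y) ^ q / b₂ ^ q - 1))
        (q * x ^ (q-1) * ((2 - x) ^ q / b₂ ^ q - 1)
          + x ^ q * (q * (2 - x) ^ (q-1) * (-1) / b₂ ^ q)) x :=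
      hu.mul ((hv.div_const _).sub_const 1)
    have hD : HasDerivAt (fun y : ℝ => (2 - y) ^ q * (1 - y ^ q / b₁ ^ q))
        (q * (2 - x) ^ (q-1) * (-1) * (1 - x ^ q / b₁ ^ q)
          + (2 - x) ^ q * (-(q * x ^ (q-1) / b₁ ^ q))) x :=
      hv.mul ((hu.div_const _).const_sub 1)
    have hu_lt : x ^ q < b₁ ^ q := Real.rpow_lt_rpow hx0.le hxb hq
    have hden1 : (0:ℝ) < 1 - x ^ q / b₁ ^ q := by
      rw [sub_pos, div_lt_one hA]; exact hu_lt
    have hvpos : (0:ℝ) < (2 - x) ^ q := Real.rpow_pos_of_pos hx2 q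
    have hupos : (0:ℝ) < x ^ q := Real.rpow_pos_of_pos hx0 q
    have hDne : (2 - x) ^ q * (1 - x ^ q / b₁ ^ q) ≠ 0 := by positivity
    have hH : HasDerivAt h
        (((q * x ^ (q-1) * ((2 - x) ^ q / b₂ ^ q - 1)
            + x ^ q * (q * (2 - x) ^ (q-1) * (-1) / b₂ ^ q))
          * ((2 - x) ^ q * (1 - x ^ q / b₁ ^ q))
          - x ^ q * ((2 - x) ^ q / b₂ ^ q - 1)
            * (q * (2 - x) ^ (q-1) * (-1) * (1 - x ^ q / b₁ ^ q)
              + (2 - x) ^ q * (-(q * x ^ (q-1) / b₁ ^ q))))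
          / ((2 - x) ^ q * (1 - x ^ q / b₁ ^ q)) ^ 2) x := by
      rw [hfun]; exact hN.div hD hDne
    refine ⟨hH.differentiableAt, ?_⟩
    rw [hH.deriv]
    apply div_nonneg _ (sq_nonneg _)
    -- rewrite x^(q-1) = x^q/x etc.
    have hxq1 : x ^ (q-1) = x ^ q / x := by
      rw [Real.rpow_sub hx0, Real.rpow_one]
    have hvq1 : (2-x) ^ (q-1) = (2-x) ^ q / (2-x) := by
      rw [Real.rpow_sub hx2, Real.rpow_one]
    rw [hxq1, hvq1]
    have hK := key x ⟨hx0, hxb⟩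
    set u := x ^ q
    set v := (2-x) ^ q
    set A := b₁ ^ q
    set B := b₂ ^ q
    have hclaim : (q * (u / x) * (v / B - 1) + u * (q * (v / (2-x)) * (-1) / B))
          * (v * (1 - u / A))
        - u * (v / B - 1) * (q * (v / (2-x)) * (-1) * (1 - u / A) + v * (-(q * (u / x) / A)))
        = q * u * v * (A * ((2-x) * (v - B)) - B * (x * (A - u)))
            / (x * (2-x) * A * B) := by
      field_simp
      ring
    rw [hclaim]
    apply div_nonneg
    · exact mul_nonneg (by positivity) hK
    · positivity
  refine ⟨main, ?_⟩
  have : MonotoneOn h (Set.Ioo (0:ℝ) b₁) := by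
    apply monotoneOn_of_deriv_nonneg (convex_Ioo 0 b₁)
    · intro x hx
      exact (main x hx).1.continuousAt.continuousWithinAt
    · intro x hx
      rw [interior_Ioo] at hx
      exact (main x hx).1.differentiableWithinAt
    · intro x hx
      rw [interior_Ioo] at hx
      exact (main x hx).2
  exact this
end

section
/- Let q > 0 and let b₁, b₂ satisfy b₁ + b₂ = 2 and 0 < b₂ < 1 < b₁ < 2. Define h(x) = [x^q·((2−x)^q/b₂^q − 1)] / [(2−x)^q·(1 − x^q/b₁^q)] for x ∈ (0, b₁). Then h(x) tends to (b₁/b₂)^{q+1} as x tends to b₁ from the left; in particular this one-sided limit is strictly greater than 1. -/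
open Filter Topology

/-! Factor `h x = (x / (2 - x))^q (b₁ / b₂)^q · ((2 - x)^q - b₂^q) / (b₁^q - x^q)`. The first two
factors are continuous at `b₁` with value `(b₁ / b₂)^(2q)`. Since `2 - b₁ = b₂`, the last one is a
quotient of difference quotients at `b₁` of `x ↦ (2 - x)^q` and `x ↦ -x^q`, so it tends to the ratio
of their derivatives, `(b₂ / b₁)^(q - 1)`. The product is `(b₁ / b₂)^(q + 1)`, which exceeds `1`
because `b₂ < 1 < b₁`. -/

theorem tendsto_sub_div_sub_of_hasDerivAt {𝕜 : Type*} [NontriviallyNormedField 𝕜]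
    {f g : 𝕜 → 𝕜} {f' g' a : 𝕜} (hf : HasDerivAt f f' a) (hg : HasDerivAt g g' a)
    (hg' : g' ≠ 0) :
    Tendsto (fun x => (f x - f a) / (g x - g a)) (𝓝[≠] a) (𝓝 (f' / g')) := by
  refine ((hasDerivAt_iff_tendsto_slope.mp hf).div
    (hasDerivAt_iff_tendsto_slope.mp hg) hg').congr' ?_
  filter_upwards [self_mem_nhdsWithin] with x hx
  rw [Pi.div_apply, slope_def_field, slope_def_field,
    div_div_div_cancel_right₀ (sub_ne_zero.mpr hx)]

theorem tendsto_rpow_sub_div_rpow_sub {a c q : ℝ} (ha : 0 < a) (hca : 0 < c - a) (hq : q ≠ 0) :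
    Tendsto (fun x => ((c - x) ^ q - (c - a) ^ q) / (a ^ q - x ^ q)) (𝓝[≠] a)
      (𝓝 ((c - a) ^ (q - 1) / a ^ (q - 1))) := by
  have hf : HasDerivAt (fun x : ℝ => (c - x) ^ q) (-(q * (c - a) ^ (q - 1))) a := by
    simpa using ((hasDerivAt_id a).const_sub c).rpow_const (p := q) (Or.inl hca.ne')
  have hg : HasDerivAt (fun x : ℝ => -x ^ q) (-(q * a ^ (q - 1))) a :=
    (Real.hasDerivAt_rpow_const (Or.inl ha.ne')).neg
  have hg' : -(q * a ^ (q - 1)) ≠ 0 :=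
    neg_ne_zero.mpr (mul_ne_zero hq (Real.rpow_pos_of_pos ha _).ne')
  convert tendsto_sub_div_sub_of_hasDerivAt hf hg hg' using 2 with x
  · ring_nf
  · field_simp

theorem rpow_mul_div_sub_one_div_mul_one_sub_div {x y a b q : ℝ}
    (hx : 0 ≤ x) (hy : 0 ≤ y) (ha : 0 < a) (hb : 0 < b) :
    x ^ q * (y ^ q / b ^ q - 1) / (y ^ q * (1 - x ^ q / a ^ q)) =
      (x / y) ^ q * (a / b) ^ q * ((y ^ q - b ^ q) / (a ^ q - x ^ q)) := by
  have haq := (Real.rpow_pos_of_pos ha q).ne'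
  have hbq := (Real.rpow_pos_of_pos hb q).ne'
  rw [Real.div_rpow hx hy, Real.div_rpow ha.le hb.le, div_sub_one hbq, one_sub_div haq]
  simp only [div_eq_mul_inv, mul_inv, inv_inv]
  ring

theorem rpow_mul_rpow_mul_rpow_sub_one_div {a b q : ℝ} (ha : 0 < a) (hb : 0 < b) :
    (a / b) ^ q * (a / b) ^ q * (b ^ (q - 1) / a ^ (q - 1)) = (a / b) ^ (q + 1) := by
  have hr : 0 < a / b := div_pos ha hb
  rw [← Real.div_rpow hb.le ha.le, ← inv_div a b, Real.inv_rpow hr.le, ← Real.rpow_neg hr.le,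
    ← Real.rpow_add hr, ← Real.rpow_add hr]
  ring_nf

theorem mmpde_aux_limit_at_b₁_general
    (q b₁ b₂ : ℝ) (hq : 0 < q)
    (hbsum : b₁ + b₂ = 2) (hb₂0 : 0 < b₂) (hb₂1 : b₂ < 1)
    (h : ℝ → ℝ)
    (hdef : ∀ x : ℝ, h x =
      x ^ q * ((2 - x) ^ q / b₂ ^ q - 1) / ((2 - x) ^ q * (1 - x ^ q / b₁ ^ q))) :
    Tendsto h (𝓝[<] b₁) (𝓝 ((b₁ / b₂) ^ (q + 1))) ∧ 1 < (b₁ / b₂) ^ (q + 1) := by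
  have hb₁ : 0 < b₁ := by linarith
  have hb₂eq : 2 - b₁ = b₂ := by linarith
  refine ⟨?_, Real.one_lt_rpow ((one_lt_div hb₂0).mpr (by linarith)) (by linarith)⟩
  have hfactor : Tendsto (fun x => (x / (2 - x)) ^ q * (b₁ / b₂) ^ q) (𝓝[<] b₁)
      (𝓝 ((b₁ / b₂) ^ q * (b₁ / b₂) ^ q)) := by
    have hcont : ContinuousAt (fun x => (x / (2 - x)) ^ q) b₁ :=
      (continuousAt_id.div (continuousAt_const.sub continuousAt_id)
        (by simp [hb₂eq, hb₂0.ne'])).rpow_const (Or.inr hq.le)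
    simpa [hb₂eq] using (hcont.tendsto.mono_left nhdsWithin_le_nhds).mul_const ((b₁ / b₂) ^ q)
  have hquotient := (tendsto_rpow_sub_div_rpow_sub hb₁ (c := 2) (by linarith) hq.ne').mono_left
    (nhdsWithin_mono b₁ fun x (hx : x < b₁) => hx.ne)
  rw [hb₂eq] at hquotient
  have hlim := hfactor.mul hquotient
  rw [rpow_mul_rpow_mul_rpow_sub_one_div hb₁ hb₂0] at hlim
  refine hlim.congr' ?_
  filter_upwards [nhdsWithin_le_nhds (Ioo_mem_nhds hb₁ (by linarith : b₁ < 2))] with x hx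
  rw [hdef, rpow_mul_div_sub_one_div_mul_one_sub_div hx.1.le (by linarith [hx.2]) hb₁ hb₂0]

/-- The auxiliary function `h` from the proof of the paper's Theorem 1 tends to
`(b₁/b₂)^{q+1}` as `x → b₁⁻`, and this one-sided limit is strictly greater than `1`. -/
theorem mmpde_aux_limit_at_b₁
    (q b₁ b₂ : ℝ) (hq : 0 < q)
    (hbsum : b₁ + b₂ = 2) (hb₂0 : 0 < b₂) (hb₂1 : b₂ < 1) (hb₁1 : 1 < b₁) (hb₁2 : b₁ < 2)
    (h : ℝ → ℝ)
    (hdef : ∀ x : ℝ, h x =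
      x ^ q * ((2 - x) ^ q / b₂ ^ q - 1) / ((2 - x) ^ q * (1 - x ^ q / b₁ ^ q))) :
    Tendsto h (𝓝[<] b₁) (𝓝 ((b₁ / b₂) ^ (q + 1))) ∧ 1 < (b₁ / b₂) ^ (q + 1) :=
  mmpde_aux_limit_at_b₁_general q b₁ b₂ hq hbsum hb₂0 hb₂1 h hdef
end

section
/- Let p, q > 0, let 0 < k₁ < k₂, and set κ = (k₁/k₂)^p. Let b₁, b₂ satisfy b₁ + b₂ = 2 and 0 < b₁ < 1 < b₂ < 2 (the case where the high-complexity subregion is the larger one). If κ < (b₁/b₂)^{q+1}, then there exists a₁ ∈ (0, b₁), with a₂ := 2 − a₁, such that κ·a₁^{-q} + a₂^{-q} ≤ κ·b₁^{-q} + b₂^{-q}. -/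
/-!
Write `κ = r ^ (q + 1)`. The cost `a ↦ κ a^{-q} + (2 - a)^{-q}` has derivative
`q ((2 - a)^{-q-1} - κ a^{-q-1})`, which is positive exactly when `r (2 - a) < a`, i.e. on
`(2r/(1+r), 2)`. The hypothesis `κ < (b₁/b₂)^{q+1}` says `r b₂ < b₁`, i.e. `b₁` lies in that
interval, so moving `a₁` slightly below `b₁` strictly lowers the cost.
-/

open Set

noncomputable def splitCost (κ q s a : ℝ) : ℝ := κ * a ^ (-q) + (s - a) ^ (-q)

lemma hasDerivAt_splitCost {κ q s a : ℝ} (ha : 0 < a) (has : a < s) :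
    HasDerivAt (splitCost κ q s) (q * ((s - a) ^ (-q - 1) - κ * a ^ (-q - 1))) a := by
  have hleft : HasDerivAt (fun x : ℝ => x ^ (-q)) (-q * a ^ (-q - 1)) a :=
    Real.hasDerivAt_rpow_const (Or.inl ha.ne')
  have hright : HasDerivAt (fun x : ℝ => (s - x) ^ (-q)) (-q * (s - a) ^ (-q - 1) * -1) a :=
    (Real.hasDerivAt_rpow_const (Or.inl (sub_pos.2 has).ne')).comp a
      ((hasDerivAt_id a).const_sub s)
  exact ((hleft.const_mul κ).add hright).congr_deriv (by ring)

lemma continuousOn_splitCost (κ q s : ℝ) : ContinuousOn (splitCost κ q s) (Ioo 0 s) :=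
  fun _ ha => (hasDerivAt_splitCost ha.1 ha.2).continuousAt.continuousWithinAt

lemma strictMonoOn_splitCost {q r s : ℝ} (hq : 0 < q) (hr : 0 ≤ r) :
    StrictMonoOn (splitCost (r ^ (q + 1)) q s) (Ioo (r * s / (1 + r)) s) := by
  have hr1 : 0 < 1 + r := by linarith
  have hpos : ∀ a ∈ Ioo (r * s / (1 + r)) s, 0 < a ∧ r * (s - a) < a := by
    rintro a ⟨hlo, hhi⟩
    rw [div_lt_iff₀ hr1] at hlo
    constructor <;> nlinarith
  refine strictMonoOn_of_deriv_pos (convex_Ioo _ _)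
    ((continuousOn_splitCost _ q s).mono fun a ha => ⟨(hpos a ha).1, ha.2⟩) ?_
  rw [interior_Ioo]
  intro a ha
  obtain ⟨ha0, hra⟩ := hpos a ha
  have hsa : 0 < s - a := sub_pos.2 ha.2
  have hneg : ∀ x : ℝ, 0 ≤ x → x ^ (-q - 1) = x⁻¹ ^ (q + 1) := fun x hx => by
    rw [Real.inv_rpow hx, ← Real.rpow_neg hx, neg_add']
  -- `r / a < (s - a)⁻¹` is `r (s - a) < a`; raising it to the power `q + 1` gives the sign.
  have hcmp : r ^ (q + 1) * a⁻¹ ^ (q + 1) < (s - a)⁻¹ ^ (q + 1) := by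
    rw [← Real.mul_rpow hr (inv_nonneg.2 ha0.le), ← div_eq_mul_inv]
    refine Real.rpow_lt_rpow (by positivity) ?_ (by linarith)
    rw [div_lt_iff₀ ha0, inv_mul_eq_div, lt_div_iff₀ hsa]
    linarith
  rw [(hasDerivAt_splitCost ha0 ha.2).deriv, hneg _ hsa.le, hneg _ ha0.le]
  exact mul_pos hq (sub_pos.2 hcmp)

theorem mmpde_core_inequality_extreme_general
    (p q k₁ k₂ b₁ b₂ : ℝ) (hq : 0 < q)
    (hk₁ : 0 < k₁) (hk : k₁ < k₂)
    (hbsum : b₁ + b₂ = 2) (hb₁0 : 0 < b₁) (hb₂1 : 1 < b₂)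
    (hκ : (k₁ / k₂) ^ p < (b₁ / b₂) ^ (q + 1)) :
    ∃ a₁ ∈ Set.Ioo (0 : ℝ) b₁,
      (k₁ / k₂) ^ p * a₁ ^ (-q) + (2 - a₁) ^ (-q) ≤
        (k₁ / k₂) ^ p * b₁ ^ (-q) + b₂ ^ (-q) := by
  set κ := (k₁ / k₂) ^ p
  have hq1 : 0 < q + 1 := by linarith
  have hκ0 : 0 ≤ κ := Real.rpow_nonneg (div_pos hk₁ (hk₁.trans hk)).le p
  set r := κ ^ (q + 1)⁻¹
  have hr : 0 ≤ r := Real.rpow_nonneg hκ0 _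
  have hκr : κ = r ^ (q + 1) := (Real.rpow_inv_rpow hκ0 hq1.ne').symm
  have hb₂ : b₂ = 2 - b₁ := by linarith
  have hrb : r * b₂ < b₁ :=
    (lt_div_iff₀ (by linarith)).1 ((Real.rpow_inv_lt_iff_of_pos hκ0 (by positivity) hq1).2 hκ)
  have hthreshold : r * 2 / (1 + r) < b₁ := by
    rw [div_lt_iff₀ (by positivity)]
    linear_combination hrb - r * hbsum
  obtain ⟨a₁, ha₁lo, ha₁b₁⟩ := exists_between hthreshold
  have hmono := strictMonoOn_splitCost (s := 2) hq hr ⟨ha₁lo, by linarith⟩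
    ⟨hthreshold, by linarith⟩ ha₁b₁
  refine ⟨a₁, ⟨lt_of_le_of_lt (by positivity) ha₁lo, ha₁b₁⟩, ?_⟩
  rw [hb₂, hκr]
  exact hmono.le

/-- Extreme-case variant of the paper's Theorem 1: when the high-complexity subregion is
the larger one (`b₁ < 1 < b₂`), the reallocation inequality still holds provided
`κ = (k₁/k₂)^p < (b₁/b₂)^{q+1}`. -/
theorem mmpde_core_inequality_extreme
    (p q k₁ k₂ b₁ b₂ : ℝ) (hp : 0 < p) (hq : 0 < q)
    (hk₁ : 0 < k₁) (hk : k₁ < k₂)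
    (hbsum : b₁ + b₂ = 2) (hb₁0 : 0 < b₁) (hb₁1 : b₁ < 1) (hb₂1 : 1 < b₂) (hb₂2 : b₂ < 2)
    (hκ : (k₁ / k₂) ^ p < (b₁ / b₂) ^ (q + 1)) :
    ∃ a₁ ∈ Set.Ioo (0 : ℝ) b₁,
      (k₁ / k₂) ^ p * a₁ ^ (-q) + (2 - a₁) ^ (-q) ≤
        (k₁ / k₂) ^ p * b₁ ^ (-q) + b₂ ^ (-q) :=
  mmpde_core_inequality_extreme_general p q k₁ k₂ b₁ b₂ hq hk₁ hk hbsum hb₁0 hb₂1 hκ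
end
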